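/- For a,b,c ∈ ℂ with c, a+b+c+2 avoiding values making denominators vanish, the function g(a,b,c;z) = ₂F₁(−a, −a−b−c−1, −a−b; z) satisfies the contiguity relation (z(1−z)∂ + az + (c+1)) • g(a,b,c;z) = (c+1)·g(a,b,c+1;z) as formal power series. -/

import Mathlib

open PowerSeries

/-- The Pochhammer symbol `(q)ₙ`. -/
noncomputable def poch (q : ℂ) (n : ℕ) : ℂ := (ascPochhammer ℂ n).eval q

/-- The Gauss hypergeometric series `₂F₁(a,b,c;x) = Σ (a)ₙ(b)ₙ/((c)ₙ n!) xⁿ`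
as a formal power series. -/
noncomputable def F (a b c : ℂ) : PowerSeries ℂ :=
  PowerSeries.mk fun n => poch a n * poch b n / (poch c n * n.factorial)

/-- Formal differentiation `∂` on `ℂ⟦x⟧`. -/
noncomputable def Dps (f : PowerSeries ℂ) : PowerSeries ℂ := PowerSeries.derivative ℂ f

/-
Put `α = -a`, `β = -a-b-c-1`, `γ = -a-b`, so that `c + 1 = γ - β` and the right-hand side is
`(γ-β)·₂F₁(α, β-1, γ)`: the claim is the contiguity relation
`z(1-z)∂F + ((γ-β) - αz)F = (γ-β)·F(α, β-1, γ)` for `F = ₂F₁(α,β,γ)`. On coefficients of `zⁿ⁺¹`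
the left side is `(n+1+γ-β) fₙ₊₁ - (α+n) fₙ`, and the ratio
`fₙ₊₁/fₙ = (α+n)(β+n)/((γ+n)(n+1))` turns it into `(γ-β)(β-1)(α+n)/((γ+n)(n+1))·fₙ`, which is the
right side because `(β-1)ₙ₊₁ = (β-1)(β)ₙ`.
-/

lemma poch_zero (q : ℂ) : poch q 0 = 1 := by simp [poch]

lemma poch_succ (q : ℂ) (n : ℕ) : poch q (n + 1) = poch q n * (q + n) := by
  simp [poch, ascPochhammer_succ_right]

lemma poch_succ' (q : ℂ) (n : ℕ) : poch q (n + 1) = q * poch (q + 1) n := by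
  simp [poch, ascPochhammer_succ_left]

lemma coeff_zero_F (α β γ : ℂ) : coeff 0 (F α β γ) = 1 := by
  simp [F, poch_zero]

-- Holds without any hypothesis on `γ`: when `γ + n = 0` both sides are junk `0`.
lemma coeff_succ_F (α β γ : ℂ) (n : ℕ) :
    coeff (n + 1) (F α β γ) = (α + n) * (β + n) / ((γ + n) * (n + 1)) * coeff n (F α β γ) := by
  simp only [F, coeff_mk, poch_succ, Nat.factorial_succ]
  push_cast
  simp only [div_eq_mul_inv, mul_inv]
  ring

lemma coeff_succ_F_sub_one (α β γ : ℂ) (n : ℕ) :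
    coeff (n + 1) (F α (β - 1) γ)
      = (α + n) * (β - 1) / ((γ + n) * (n + 1)) * coeff n (F α β γ) := by
  rw [F, F, coeff_mk, coeff_mk, poch_succ' (β - 1), sub_add_cancel, poch_succ α, poch_succ γ,
    Nat.factorial_succ]
  push_cast
  simp only [div_eq_mul_inv, mul_inv]
  ring

lemma coeff_X_mul_Dps (f : PowerSeries ℂ) (n : ℕ) : coeff n (X * Dps f) = n * coeff n f := by
  cases n with
  | zero => simp
  | succ n =>
    rw [coeff_succ_X_mul, Dps, coeff_derivative]
    push_cast
    ring

lemma coeff_zero_contiguity (p q : ℂ) (f : PowerSeries ℂ) :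
    coeff 0 (X * (1 - X) * Dps f + (C p * X + C q) * f) = q * coeff 0 f := by
  simp

lemma coeff_succ_contiguity (p q : ℂ) (f : PowerSeries ℂ) (n : ℕ) :
    coeff (n + 1) (X * (1 - X) * Dps f + (C p * X + C q) * f)
      = (n + 1 + q) * coeff (n + 1) f + (p - n) * coeff n f := by
  have hsplit : X * (1 - X) * Dps f + (C p * X + C q) * f
      = X * Dps f - X * (X * Dps f) + X * (C p * f) + C q * f := by ring
  rw [hsplit]
  simp only [map_add, map_sub, coeff_X_mul_Dps]
  simp only [coeff_succ_X_mul, coeff_X_mul_Dps, coeff_C_mul]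
  push_cast
  ring

theorem F_contiguity_sub_one (α β γ : ℂ) (hγ : ∀ n : ℕ, γ ≠ -(n : ℂ)) :
    X * (1 - X) * Dps (F α β γ) + (C (-α) * X + C (γ - β)) * F α β γ
      = C (γ - β) * F α (β - 1) γ := by
  ext n
  rw [coeff_C_mul]
  cases n with
  | zero => rw [coeff_zero_contiguity, coeff_zero_F, coeff_zero_F]
  | succ n =>
    have hγn : γ + n ≠ 0 := fun h => hγ n (eq_neg_of_add_eq_zero_left h)
    have hn : (n : ℂ) + 1 ≠ 0 := Nat.cast_add_one_ne_zero n
    rw [coeff_succ_contiguity, coeff_succ_F, coeff_succ_F_sub_one]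
    field_simp
    ring

/-- with `g(a,b,c;z) = ₂F₁(−a, −a−b−c−1, −a−b; z)`,
`(z(1−z)∂ + az + (c+1)) • g(a,b,c;z) = (c+1)·g(a,b,c+1;z)` as formal power
series, provided `−a−b` is not a nonpositive integer. -/
theorem contiguity_c_oshima (a b c : ℂ) (h : ∀ n : ℕ, -a - b ≠ -(n : ℂ)) :
    X * (1 - X) * Dps (F (-a) (-a - b - c - 1) (-a - b))
        + (C a * X + C (c + 1)) * F (-a) (-a - b - c - 1) (-a - b)
      = C (c + 1) * F (-a) (-a - b - (c + 1) - 1) (-a - b) := by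
  have hcontig := F_contiguity_sub_one (-a) (-a - b - c - 1) (-a - b) h
  rwa [neg_neg, show -a - b - (-a - b - c - 1) = c + 1 by ring,
    show -a - b - c - 1 - 1 = -a - b - (c + 1) - 1 by ring] at hcontig
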